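/- arXiv:gr-qc/0609077 — 2 statements merged into one kernel-verified Lean document; each statement's English description precedes it below -/
import Mathlib

section
/- Let γ > 0 and 1/2 < λ < 1, and let μ : (t₁, t₂] → (0, ∞) solve μ' = −3√(μ/3) γ μ^λ (from μ̇ = −3H(μ+p), p + μ = γμ^λ, H = √(μ/3) > 0). Then the backward solution satisfies μ(t) → ∞ as t → t₁⁺ at a finite time t₁ if and only if ∫^∞ du/(√3 γ u^{λ+1/2}) < ∞, which holds since λ + 1/2 > 1. Moreover ∫^{∞} √(u/3) du / (√3 γ u^{λ + 1/2}) = ∫^∞ du/(3γ u^λ) = ∞ (since λ < 1), so log a(t) → −∞, i.e., a(t) → 0, as t → t₁⁺. -/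
open Real Filter Topology Set MeasureTheory

lemma tendsto_rpow_neg_zero_right {q : ℝ} (hq : q < 0) :
    Tendsto (fun x : ℝ => x ^ q) (nhdsWithin 0 (Ioi 0)) atTop := by
  have h1 : Tendsto (fun x : ℝ => x ^ (-q)) (nhdsWithin 0 (Ioi 0)) (nhdsWithin 0 (Ioi 0)) := by
    apply tendsto_nhdsWithin_of_tendsto_nhds_of_eventually_within
    · have h := (Real.continuousAt_rpow_const 0 (-q) (Or.inr (by linarith))).continuousWithinAt
        (s := Ioi (0:ℝ))
      simpa [Real.zero_rpow (by linarith : -q ≠ 0)] using h.tendsto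
    · filter_upwards [self_mem_nhdsWithin] with x hx
      exact Real.rpow_pos_of_pos hx _
  have h2 := tendsto_inv_nhdsGT_zero.comp h1
  refine h2.congr' ?_
  filter_upwards [self_mem_nhdsWithin] with x hx
  simp [Function.comp, ← Real.rpow_neg (le_of_lt hx)]

/-- For the equation of state `p + μ = γμ^lam`, `γ > 0`, `1/2 < lam < 1`, the density
solving `μ' = −3√(μ/3)γμ^lam` blows up backwards at a finite time `t₁`
(since `∫^∞ du/(√3 γ u^{lam+1/2}) < ∞` as `lam + 1/2 > 1`), while
`∫^∞ du/(3γu^lam) = ∞` (since `lam < 1`), so `log a → −∞`, i.e. the integral of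
`H = √(μ/3)` over `(t₁, t₂]` diverges and `a → 0`. -/
theorem big_bang_type_backward_blowup
    (γ lam μi t₂ : ℝ) (hγ : 0 < γ) (hlam1 : 1/2 < lam) (hlam2 : lam < 1) (hμi : 0 < μi) :
    IntegrableOn (fun u => 1 / (Real.sqrt 3 * γ * u ^ (lam + 1/2))) (Ioi μi) ∧
    ¬ IntegrableOn (fun u => 1 / (3 * γ * u ^ lam)) (Ioi μi) ∧
    (∃ t₁ : ℝ, t₁ < t₂ ∧ ∃ μ : ℝ → ℝ,
      μ t₂ = μi ∧
      (∀ t ∈ Ioc t₁ t₂, 0 < μ t ∧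
        HasDerivAt μ (-(3 * Real.sqrt (μ t / 3) * γ * μ t ^ lam)) t) ∧
      Tendsto μ (nhdsWithin t₁ (Ioi t₁)) atTop ∧
      ¬ IntegrableOn (fun t => Real.sqrt (μ t / 3)) (Ioc t₁ t₂)) := by
  have h3 : (0:ℝ) < Real.sqrt 3 := Real.sqrt_pos.2 (by norm_num)
  have h33 : Real.sqrt 3 * Real.sqrt 3 = 3 := Real.mul_self_sqrt (by norm_num)
  refine ⟨?_, ?_, ?_⟩
  · -- first integrability
    have base : IntegrableOn (fun u : ℝ => u ^ (-(lam + 1/2))) (Ioi μi) :=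
      integrableOn_Ioi_rpow_of_lt (by linarith) hμi
    refine MeasureTheory.IntegrableOn.congr_fun (base.const_mul (Real.sqrt 3 * γ)⁻¹)
      (fun u hu => ?_) measurableSet_Ioi
    have hu0 : (0:ℝ) < u := lt_trans hμi hu
    rw [Real.rpow_neg hu0.le]
    field_simp
  · -- second non-integrability
    intro h
    have h2 : IntegrableOn (fun u : ℝ => u ^ (-lam)) (Ioi μi) := by
      refine MeasureTheory.IntegrableOn.congr_fun (h.const_mul (3 * γ))
        (fun u hu => ?_) measurableSet_Ioi
      have hu0 : (0:ℝ) < u := lt_trans hμi hu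
      rw [Real.rpow_neg hu0.le]
      field_simp
    rw [integrableOn_Ioi_rpow_iff hμi] at h2
    linarith
  · -- the solution
    set p : ℝ := lam - 1/2 with hp_def
    have hp0 : 0 < p := by simp only [hp_def]; linarith
    have hp2 : p < 1/2 := by simp only [hp_def]; linarith
    set k : ℝ := p * (Real.sqrt 3 * γ) with hk_def
    have hk : 0 < k := by positivity
    set q : ℝ := -p⁻¹ with hq_def
    have hqinv : 0 < p⁻¹ := inv_pos.2 hp0
    have hq : q < 0 := by simp only [hq_def]; linarith
    set t₁ : ℝ := t₂ - μi ^ (-p) / k with ht1_def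
    have hT : 0 < μi ^ (-p) / k := div_pos (Real.rpow_pos_of_pos hμi _) hk
    have ht12 : t₁ < t₂ := by simp only [ht1_def]; linarith
    -- the algebraic key identity
    have key : ∀ X : ℝ, 0 < X →
        3 * Real.sqrt (X / 3) * γ * X ^ lam = Real.sqrt 3 * γ * X ^ (lam + 1/2) := by
      intro X hX
      have h3' : 3 / Real.sqrt 3 = Real.sqrt 3 := by
        rw [div_eq_iff h3.ne']; exact h33.symm
      rw [Real.sqrt_div hX.le, Real.sqrt_eq_rpow, Real.rpow_add hX,
        show 3 * (X ^ (1/2:ℝ) / Real.sqrt 3) * γ * X ^ lam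
          = 3 / Real.sqrt 3 * (X ^ (1/2:ℝ) * γ * X ^ lam) by ring, h3']
      ring
    refine ⟨t₁, ht12, fun t => (k * (t - t₁)) ^ q, ?_, ?_, ?_, ?_⟩
    · -- μ t₂ = μi
      show (k * (t₂ - t₁)) ^ q = μi
      have h1 : k * (t₂ - t₁) = μi ^ (-p) := by
        simp only [ht1_def]
        field_simp
        ring
      rw [h1, ← Real.rpow_mul hμi.le]
      rw [show -p * q = 1 by rw [hq_def]; field_simp]
      exact Real.rpow_one μi
    · -- positivity and derivative
      intro t ht
      have hx : 0 < k * (t - t₁) := mul_pos hk (by linarith [ht.1])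
      set x := k * (t - t₁) with hx_def
      have hxq : 0 < x ^ q := Real.rpow_pos_of_pos hx q
      refine ⟨hxq, ?_⟩
      have hinner : HasDerivAt (fun t : ℝ => k * (t - t₁)) k t := by
        simpa using ((hasDerivAt_id t).sub_const t₁).const_mul k
      have houter : HasDerivAt (fun y : ℝ => y ^ q) (q * x ^ (q - 1)) x :=
        Real.hasDerivAt_rpow_const (Or.inl hx.ne')
      have hcomp := houter.comp t hinner
      convert hcomp using 1
      · rfl
      · rfl
      · rfl
      rw [key _ hxq]
      have e4 : (x ^ q) ^ (lam + 1/2) = x ^ (q - 1) := by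
        rw [← Real.rpow_mul hx.le]
        congr 1
        have hpq : q * p = -1 := by rw [hq_def]; field_simp
        calc q * (lam + 1/2) = q * p + q := by rw [hp_def]; ring
          _ = q - 1 := by rw [hpq]; ring
      have e5 : q * k = -(Real.sqrt 3 * γ) := by
        rw [hq_def, hk_def]
        field_simp
      rw [e4, show q * x ^ (q - 1) * k = q * k * x ^ (q - 1) by ring, e5]
      ring
    · -- blowup
      have hin : Tendsto (fun t : ℝ => k * (t - t₁)) (nhdsWithin t₁ (Ioi t₁))
          (nhdsWithin 0 (Ioi 0)) := by
        apply tendsto_nhdsWithin_of_tendsto_nhds_of_eventually_within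
        · have hc : ContinuousAt (fun t : ℝ => k * (t - t₁)) t₁ := by fun_prop
          have := hc.tendsto.mono_left (nhdsWithin_le_nhds (s := Ioi t₁))
          simpa using this
        · filter_upwards [self_mem_nhdsWithin] with x hx
          exact mul_pos hk (by simpa [sub_pos] using hx)
      exact (tendsto_rpow_neg_zero_right hq).comp hin
    · -- non-integrability of H
      intro h
      have hemb : MeasurableEmbedding (fun x : ℝ => x + t₁) :=
        (MeasurableEquiv.addRight t₁).measurableEmbedding
      have e := (measurePreserving_add_right volume t₁).integrableOn_comp_preimage hemb
        (f := fun t => Real.sqrt ((k * (t - t₁)) ^ q / 3)) (s := Ioc t₁ t₂)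
      have hpre : (fun x : ℝ => x + t₁) ⁻¹' Ioc t₁ t₂ = Ioc 0 (t₂ - t₁) := by
        ext s
        simp only [mem_preimage, mem_Ioc]
        constructor <;> rintro ⟨a, b⟩ <;> constructor <;> linarith
      have h2 := e.2 h
      rw [hpre] at h2
      have h2' : IntegrableOn (fun s : ℝ => s ^ (q/2)) (Ioo 0 (t₂ - t₁)) := by
        have hmono := h2.mono_set Ioo_subset_Ioc_self
        refine MeasureTheory.IntegrableOn.congr_fun
          (hmono.const_mul (Real.sqrt 3 * (k ^ (q/2))⁻¹)) (fun s hs => ?_) measurableSet_Ioo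
        have hs0 : 0 < s := hs.1
        have hks : 0 < k * s := mul_pos hk hs0
        have hkq : 0 < k ^ (q/2) := Real.rpow_pos_of_pos hk _
        simp only [Function.comp_apply, add_sub_cancel_right]
        have hsq : Real.sqrt ((k * s) ^ q) = (k * s) ^ (q/2) := by
          rw [Real.sqrt_eq_rpow, ← Real.rpow_mul hks.le]
          congr 1
          ring
        rw [Real.sqrt_div (Real.rpow_pos_of_pos hks q).le, hsq,
          Real.mul_rpow hk.le hs0.le]
        field_simp
      rw [intervalIntegral.integrableOn_Ioo_rpow_iff (by linarith : (0:ℝ) < t₂ - t₁)] at h2'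
      -- h2' : -1 < q / 2, i.e. p⁻¹ < 2, contradicting p < 1/2
      have hpi : p⁻¹ < 2 := by
        rw [hq_def] at h2'
        linarith
      have hfin : 1 < 2 * p := by
        have hh := mul_lt_mul_of_pos_left hpi hp0
        rw [mul_inv_cancel₀ hp0.ne'] at hh
        linarith
      rw [hp_def] at hfin
      linarith
end

section
/- Let μ, p, H, a satisfy the Friedmann system for k = 0: 3H² = μ, μ̇ = −3H(μ + p), H = ȧ/a, with p = wμ, w < −1, μ > 0, H > 0 on [t₀, t_s), and suppose |p(t)| → ∞ as t → t_s⁻ with t_s < ∞. Then μ(t) → ∞, H(t) → ∞, and a(t) → ∞ as t → t_s⁻. Conversely, if a → ∞ and H → ∞ and μ → ∞ at finite t_s then |p| = |w|μ → ∞. -/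
open Real Filter Topology Set

/-!
With `p = wμ` the continuity equation reads `(log μ)˙ = -3(1 + w) H = -3(1 + w) (log a)˙`, so
`μ a^{3(1+w)}` is conserved: `μ ∝ a^{-3(1+w)}` with a positive exponent since `w < -1`. Hence
`μ → ∞` forces `a → ∞`, the Friedmann constraint gives `H = √(μ/3) → ∞`, and `|p| = |w| μ`
blows up exactly when `μ` does.
-/

lemma Convex.eq_of_forall_hasDerivAt_zero {f : ℝ → ℝ} {s : Set ℝ} (hs : Convex ℝ s)
    (hf : ∀ x ∈ s, HasDerivAt f 0 x) {x y : ℝ} (hx : x ∈ s) (hy : y ∈ s) : f x = f y := by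
  simpa [sub_eq_zero, eq_comm] using hs.norm_image_sub_le_of_norm_hasDerivWithin_le
    (fun z hz => (hf z hz).hasDerivWithinAt) (fun _ _ => norm_zero.le) hx hy

lemma tendsto_atTop_of_mul_sq_eq {α : Type*} {l : Filter α} {f g : α → ℝ} {c : ℝ} (hc : 0 < c)
    (hg : ∀ᶠ x in l, 0 ≤ g x) (hfg : ∀ᶠ x in l, c * g x ^ 2 = f x) (hf : Tendsto f l atTop) :
    Tendsto g l atTop := by
  refine (tendsto_sqrt_atTop.comp (hf.atTop_div_const hc)).congr' ?_
  filter_upwards [hg, hfg] with x hgx hx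
  rw [Function.comp_apply, ← hx, mul_div_cancel_left₀ _ hc.ne', sqrt_sq hgx]

lemma tendsto_atTop_of_log_add_mul_log_eq {α : Type*} {l : Filter α} {f g : α → ℝ} {γ C : ℝ}
    (hγ : γ < 0) (hg : ∀ᶠ x in l, 0 < g x) (hfg : ∀ᶠ x in l, log (f x) + γ * log (g x) = C)
    (hf : Tendsto f l atTop) : Tendsto g l atTop := by
  have hlog : Tendsto (fun x => (log (f x) - C) * (-γ)⁻¹) l atTop :=
    (tendsto_atTop_add_const_right _ (-C) (tendsto_log_atTop.comp hf)).atTop_mul_const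
      (inv_pos.2 (neg_pos.2 hγ))
  refine (tendsto_exp_atTop.comp hlog).congr' ?_
  filter_upwards [hg, hfg] with x hgx hx
  have hlog_g : (log (f x) - C) * (-γ)⁻¹ = log (g x) := by
    rw [← hx]
    field_simp [hγ.ne]
    ring
  rw [Function.comp_apply, hlog_g, exp_log hgx]

lemma hasDerivAt_log_density_add_log_scale {w t : ℝ} {μ p H a : ℝ → ℝ}
    (hμ : HasDerivAt μ (-3 * H t * (μ t + p t)) t) (ha : HasDerivAt a (a t * H t) t)
    (heos : p t = w * μ t) (hμpos : 0 < μ t) (hapos : 0 < a t) :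
    HasDerivAt (fun s => log (μ s) + 3 * (1 + w) * log (a s)) 0 t := by
  refine ((hμ.log hμpos.ne').add ((ha.log hapos.ne').const_mul (3 * (1 + w)))).congr_deriv ?_
  rw [heos]
  field_simp
  ring

/-- Characterization of the `(S₂, N₃, B₁)` big rip for a phantom fluid
`p = wμ`, `w < −1`, satisfying the flat Friedmann system on `[t₀, t_s)`:
`|p| → ∞` as `t → t_s⁻` iff (indeed implies and is implied by)
`μ → ∞`, `H → ∞` and `a → ∞`. -/
theorem phantom_characterization
    (w t₀ ts : ℝ) (hw : w < -1) (hts : t₀ < ts)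
    (μ p H a : ℝ → ℝ)
    (hFried : ∀ t ∈ Ico t₀ ts, 3 * (H t) ^ 2 = μ t)
    (hcont : ∀ t ∈ Ico t₀ ts, HasDerivAt μ (-3 * H t * (μ t + p t)) t)
    (hscale : ∀ t ∈ Ico t₀ ts, HasDerivAt a (a t * H t) t)
    (heos : ∀ t ∈ Ico t₀ ts, p t = w * μ t)
    (hμpos : ∀ t ∈ Ico t₀ ts, 0 < μ t)
    (hHpos : ∀ t ∈ Ico t₀ ts, 0 < H t)
    (hapos : ∀ t ∈ Ico t₀ ts, 0 < a t) :
    (Tendsto (fun t => |p t|) (nhdsWithin ts (Iio ts)) atTop →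
      Tendsto μ (nhdsWithin ts (Iio ts)) atTop ∧
      Tendsto H (nhdsWithin ts (Iio ts)) atTop ∧
      Tendsto a (nhdsWithin ts (Iio ts)) atTop) ∧
    ((Tendsto a (nhdsWithin ts (Iio ts)) atTop ∧
      Tendsto H (nhdsWithin ts (Iio ts)) atTop ∧
      Tendsto μ (nhdsWithin ts (Iio ts)) atTop) →
      Tendsto (fun t => |p t|) (nhdsWithin ts (Iio ts)) atTop) := by
  have hIco : ∀ᶠ t in 𝓝[<] ts, t ∈ Ico t₀ ts := Ico_mem_nhdsLT hts
  have habs_p : ∀ᶠ t in 𝓝[<] ts, |p t| = -w * μ t := by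
    filter_upwards [hIco] with t ht
    rw [heos t ht, abs_mul, abs_of_neg (by linarith), abs_of_pos (hμpos t ht)]
  have hp_iff_μ : Tendsto (fun t => |p t|) (𝓝[<] ts) atTop ↔ Tendsto μ (𝓝[<] ts) atTop := by
    rw [tendsto_congr' habs_p, tendsto_const_mul_atTop_of_pos (by linarith)]
  refine ⟨fun hp => ?_, fun ⟨_, _, hμ⟩ => hp_iff_μ.2 hμ⟩
  have hμ := hp_iff_μ.1 hp
  have hconserved : ∀ t ∈ Ico t₀ ts,
      log (μ t) + 3 * (1 + w) * log (a t) = log (μ t₀) + 3 * (1 + w) * log (a t₀) :=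
    fun t ht => (convex_Ico t₀ ts).eq_of_forall_hasDerivAt_zero
      (fun s hs => hasDerivAt_log_density_add_log_scale (hcont s hs) (hscale s hs) (heos s hs)
        (hμpos s hs) (hapos s hs)) ht (left_mem_Ico.2 hts)
  exact ⟨hμ,
    tendsto_atTop_of_mul_sq_eq three_pos (hIco.mono fun t ht => (hHpos t ht).le)
      (hIco.mono hFried) hμ,
    tendsto_atTop_of_log_add_mul_log_eq (by linarith) (hIco.mono hapos) (hIco.mono hconserved) hμ⟩
end
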